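/- Let (T, χ) be a tree decomposition of a graph G of width ≤ W, S a subtree of T, and (S', χ') a tree decomposition of width ≤ W of some graph on V_S = ⋃_{t ∈ V(S)} χ(t). Construct T'' by taking the disjoint union of S' and the components T_1, …, T_r of T − V(S), and connecting each T_i (via its node t_i adjacent to S in T) to a node s_i* of S' whose bag χ'(s_i*) contains B_i = V_S ∩ ⋃_{t ∈ V(T_i)} χ(t), assuming such nodes exist. Define χ'' to agree with χ' on V(S') and with χ on the nodes of each T_i. Then T'' is a tree, and every bag of (T'', χ'') has size at most W + 1. -/

import Mathlib

/-!
The glued graph is connected because every component of `T - S` is joined to `S'`, which is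
connected. It is acyclic because every edge is a bridge: map the glued graph to `T'` by sending
each component of `T - S` to its attachment node `sstar C`, or to `T` by sending all of `S'` to
one node of `S`. For a suitable choice of map, the edge goes to an edge of a tree, hence a bridge,
and every other edge goes to a pair of nodes still joined after deleting that bridge. The bags of
the glued decomposition are bags of `(T, χ)` or of `(S', χ')`, so the width bound is inherited.
-/

/-- A tree decomposition of a graph `G` whose relevant vertex set is `U ⊆ V`:
`T` is a tree, bags are subsets of `U`, every edge of `G` is contained in some
bag, and for every vertex of `U` the tree nodes whose bag contains it induce a
nonempty connected subtree of `T`. -/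
structure TreeDecompOn (V : Type) (I : Type) (U : Set V) (G : SimpleGraph V) where
  T : SimpleGraph I
  isTree : T.IsTree
  bag : I → Set V
  bag_sub : ∀ t : I, bag t ⊆ U
  cover : ∀ ⦃u v : V⦄, G.Adj u v → ∃ t : I, u ∈ bag t ∧ v ∈ bag t
  conn : ∀ v ∈ U, (T.induce {t : I | v ∈ bag t}).Connected

open SimpleGraph Sum

namespace SimpleGraph

variable {α β : Type*} {G : SimpleGraph α} {H : SimpleGraph β}

theorem Reachable.of_forall_adj (φ : α → β)
    (hφ : ∀ ⦃u v⦄, G.Adj u v → H.Reachable (φ u) (φ v)) {x y : α} (h : G.Reachable x y) :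
    H.Reachable (φ x) (φ y) := by
  obtain ⟨w⟩ := h
  induction w with
  | nil => rfl
  | cons hadj _ ih => exact (hφ hadj).trans ih

theorem isBridge_of_map (φ : α → β) {x y : α} (hbr : H.IsBridge s(φ x, φ y))
    (hφ : ∀ ⦃u v⦄, (G.deleteEdges {s(x, y)}).Adj u v →
      (H.deleteEdges {s(φ x, φ y)}).Reachable (φ u) (φ v)) :
    G.IsBridge s(x, y) :=
  isBridge_iff.mpr fun h => isBridge_iff.mp hbr (h.of_forall_adj φ hφ)

theorem Reachable.deleteEdges_of_induce {S : Set α} {x y : S} (h : (G.induce S).Reachable x y)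
    {e : Sym2 α} (he : ∀ p ∈ S, ∀ q ∈ S, s(p, q) ≠ e) :
    (G.deleteEdges {e}).Reachable x y :=
  h.of_forall_adj Subtype.val fun u v huv =>
    Adj.reachable (G := G.deleteEdges {e})
      (deleteEdges_adj.mpr ⟨huv, fun h => he u u.2 v v.2 (Set.mem_singleton_iff.mp h)⟩)

theorem Preconnected.reachable_deleteEdges_of_adj {S : Set α} (hS : (G.induce S).Preconnected)
    {s s' w : α} (hs : s ∈ S) (hs' : s' ∈ S) (hw : G.Adj s' w) {e : Sym2 α}
    (hS_off : ∀ p ∈ S, ∀ q ∈ S, s(p, q) ≠ e) (he : s(s', w) ≠ e) :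
    (G.deleteEdges {e}).Reachable s w :=
  (Reachable.deleteEdges_of_induce (hS ⟨s, hs⟩ ⟨s', hs'⟩) hS_off).trans
    (Adj.reachable (G := G.deleteEdges {e}) (deleteEdges_adj.mpr ⟨hw, he⟩))

theorem Walk.exists_reachable_induce_compl_adj {S : Set α} {u s : α} (w : G.Walk u s)
    (hs : s ∈ S) (hu : u ∉ S) :
    ∃ t : ↥Sᶜ, (∃ s' ∈ S, G.Adj s' t) ∧ (G.induce Sᶜ).Reachable ⟨u, hu⟩ t := by
  induction w with
  | nil => exact absurd hs hu
  | @cons u v _ hadj w ih =>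
    by_cases hv : v ∈ S
    · exact ⟨⟨u, hu⟩, ⟨v, hv, hadj.symm⟩, .rfl⟩
    · obtain ⟨t, ht, hreach⟩ := ih hs hv
      have huv : (G.induce Sᶜ).Adj ⟨u, hu⟩ ⟨v, hv⟩ := hadj
      exact ⟨t, ht, huv.reachable.trans hreach⟩

end SimpleGraph

section Glue

variable {I J : Type*} {T' : SimpleGraph J} {T : SimpleGraph I} {S : Set I}
  {sstar : (T.induce Sᶜ).ConnectedComponent → J}

variable (T' T S sstar) in
def glue : SimpleGraph (J ⊕ ↥Sᶜ) :=
  SimpleGraph.fromRel fun x y =>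
    match x, y with
    | inl a, inl b => T'.Adj a b
    | inr a, inr b => T.Adj a.1 b.1
    | inl a, inr t => (∃ s ∈ S, T.Adj s t.1) ∧ a = sstar ((T.induce Sᶜ).connectedComponentMk t)
    | inr t, inl a => (∃ s ∈ S, T.Adj s t.1) ∧ a = sstar ((T.induce Sᶜ).connectedComponentMk t)

@[simp]
theorem glue_adj_inl_inl {a b : J} : (glue T' T S sstar).Adj (inl a) (inl b) ↔ T'.Adj a b := by
  simp only [glue, fromRel_adj, ne_eq, inl.injEq]
  exact ⟨fun ⟨_, h⟩ => h.elim id .symm, fun h => ⟨h.ne, .inl h⟩⟩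

@[simp]
theorem glue_adj_inr_inr {u v : ↥Sᶜ} : (glue T' T S sstar).Adj (inr u) (inr v) ↔ T.Adj u v := by
  simp only [glue, fromRel_adj, ne_eq, inr.injEq]
  exact ⟨fun ⟨_, h⟩ => h.elim id .symm, fun h => ⟨fun huv => h.ne (congrArg _ huv), .inl h⟩⟩

@[simp]
theorem glue_adj_inl_inr {a : J} {t : ↥Sᶜ} : (glue T' T S sstar).Adj (inl a) (inr t) ↔
    (∃ s ∈ S, T.Adj s t) ∧ a = sstar ((T.induce Sᶜ).connectedComponentMk t) := by
  simp [glue]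

theorem glue_connected (hT : T.Connected) (hT' : T'.Connected) (hS : S.Nonempty) :
    (glue T' T S sstar).Connected := by
  obtain ⟨j₀⟩ := hT'.nonempty
  obtain ⟨s₀, hs₀⟩ := hS
  have reach_inl (a : J) : (glue T' T S sstar).Reachable (inl j₀) (inl a) :=
    (hT'.preconnected j₀ a).map ⟨inl, glue_adj_inl_inl.mpr⟩
  refine (connected_iff_exists_forall_reachable _).mpr ⟨inl j₀, ?_⟩
  rintro (a | u)
  · exact reach_inl a
  obtain ⟨w⟩ := hT.preconnected u s₀
  obtain ⟨t, hattach, hut⟩ := w.exists_reachable_induce_compl_adj hs₀ u.2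
  have hut' : (glue T' T S sstar).Reachable (inr u) (inr t) :=
    hut.map ⟨inr, glue_adj_inr_inr.mpr⟩
  exact (reach_inl _).trans ((glue_adj_inl_inr.mpr ⟨hattach, rfl⟩).reachable.trans hut'.symm)

theorem glue_isBridge_inl_inl (hT' : T'.IsAcyclic) {a b : J} (hab : T'.Adj a b) :
    (glue T' T S sstar).IsBridge s(inl a, inl b) := by
  refine isBridge_of_map (Sum.elim id fun t => sstar ((T.induce Sᶜ).connectedComponentMk t))
    (isAcyclic_iff_forall_adj_isBridge.mp hT' hab) ?_
  rintro (p | u) (q | v) huv <;> obtain ⟨huv, hne⟩ := deleteEdges_adj.mp huv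
  · refine Adj.reachable (deleteEdges_adj.mpr ⟨glue_adj_inl_inl.mp huv, fun h => hne ?_⟩)
    simpa [Sym2.eq_iff] using h
  · simp [(glue_adj_inl_inr.mp huv).2]
  · simp [(glue_adj_inl_inr.mp huv.symm).2]
  · have huv' : (T.induce Sᶜ).Adj u v := glue_adj_inr_inr.mp huv
    simp [ConnectedComponent.sound huv'.reachable]

theorem glue_isBridge_inr_inr (hT : T.IsAcyclic) (hS : (T.induce S).Connected) {u v : ↥Sᶜ}
    (huv : T.Adj u v) : (glue T' T S sstar).IsBridge s(inr u, inr v) := by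
  obtain ⟨⟨s, hs⟩⟩ := hS.nonempty
  have hoff : ∀ p ∈ S, ∀ q, s(p, q) ≠ s(u.1, v.1) := by
    intro p hp q h
    rcases Sym2.eq_iff.mp h with ⟨rfl, -⟩ | ⟨rfl, -⟩
    exacts [u.2 hp, v.2 hp]
  refine isBridge_of_map (Sum.elim (fun _ => s) Subtype.val)
    (isAcyclic_iff_forall_adj_isBridge.mp hT huv) ?_
  have reach_inl_inr {j : J} {w : ↥Sᶜ} (hjw : (glue T' T S sstar).Adj (inl j) (inr w)) :
      (T.deleteEdges {s(u.1, v.1)}).Reachable s w := by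
    obtain ⟨⟨s', hs', hw⟩, -⟩ := glue_adj_inl_inr.mp hjw
    exact hS.preconnected.reachable_deleteEdges_of_adj hs hs' hw (fun p hp q _ => hoff p hp q)
      (hoff s' hs' w)
  rintro (p | w) (q | w') hww' <;> obtain ⟨hww', hne⟩ := deleteEdges_adj.mp hww'
  · exact .rfl
  · exact reach_inl_inr hww'
  · exact (reach_inl_inr hww'.symm).symm
  · refine Adj.reachable (deleteEdges_adj.mpr ⟨glue_adj_inr_inr.mp hww', fun h => hne ?_⟩)
    simpa [Sym2.eq_iff, Subtype.ext_iff] using h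

theorem glue_isBridge_inl_inr (hT : T.IsAcyclic) (hS : (T.induce S).Preconnected) {a : J}
    {t : ↥Sᶜ} (hat : (glue T' T S sstar).Adj (inl a) (inr t)) :
    (glue T' T S sstar).IsBridge s(inl a, inr t) := by
  obtain ⟨⟨s, hs, hst⟩, ha⟩ := glue_adj_inl_inr.mp hat
  refine isBridge_of_map (Sum.elim (fun _ => s) Subtype.val)
    (isAcyclic_iff_forall_adj_isBridge.mp hT hst) ?_
  have hS_off : ∀ p ∈ S, ∀ q ∈ S, s(p, q) ≠ s(s, t.1) := by
    intro p hp q hq h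
    rcases Sym2.eq_iff.mp h with ⟨-, rfl⟩ | ⟨rfl, -⟩
    exacts [t.2 hq, t.2 hp]
  have reach_inl_inr {j : J} {w : ↥Sᶜ} (hjw : (glue T' T S sstar).Adj (inl j) (inr w))
      (hne : s(inl j, inr w) ≠ s(inl a, inr t)) :
      (T.deleteEdges {s(s, t.1)}).Reachable s w := by
    obtain ⟨⟨s', hs', hw⟩, rfl⟩ := glue_adj_inl_inr.mp hjw
    refine hS.reachable_deleteEdges_of_adj hs hs' hw hS_off fun h => ?_
    rcases Sym2.eq_iff.mp h with ⟨-, hwt⟩ | ⟨rfl, -⟩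
    -- both glued edges would then join `sstar` of the component of `t` to `t`
    · obtain rfl : w = t := Subtype.ext hwt
      exact hne (by rw [ha])
    · exact t.2 hs'
  rintro (p | w) (q | w') hww' <;> obtain ⟨hww', hne⟩ := deleteEdges_adj.mp hww'
  · exact .rfl
  · exact reach_inl_inr hww' fun h => hne (Set.mem_singleton_iff.mpr h)
  · exact (reach_inl_inr hww'.symm fun h => hne (Set.mem_singleton_iff.mpr
      (Sym2.eq_swap.trans h))).symm
  · refine Adj.reachable (deleteEdges_adj.mpr ⟨glue_adj_inr_inr.mp hww', fun h => ?_⟩)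
    have h : s(w.1, w'.1) = s(s, t.1) := Set.mem_singleton_iff.mp h
    rcases Sym2.eq_iff.mp h with ⟨hws, -⟩ | ⟨-, hw's⟩
    exacts [w.2 (hws ▸ hs), w'.2 (hw's ▸ hs)]

theorem glue_isAcyclic (hT : T.IsAcyclic) (hT' : T'.IsAcyclic) (hS : (T.induce S).Connected) :
    (glue T' T S sstar).IsAcyclic := by
  refine isAcyclic_iff_forall_adj_isBridge.mpr ?_
  rintro (a | u) (b | v) h
  · exact glue_isBridge_inl_inl hT' (glue_adj_inl_inl.mp h)
  · exact glue_isBridge_inl_inr hT hS.preconnected h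
  · exact Sym2.eq_swap ▸ glue_isBridge_inl_inr hT hS.preconnected h.symm
  · exact glue_isBridge_inr_inr hT hS (glue_adj_inr_inr.mp h)

theorem glue_isTree (hT : T.IsTree) (hT' : T'.IsTree) (hS : (T.induce S).Connected) :
    (glue T' T S sstar).IsTree :=
  ⟨glue_connected hT.connected hT'.connected (Set.nonempty_coe_sort.mp hS.nonempty),
    glue_isAcyclic hT.isAcyclic hT'.isAcyclic hS⟩

end Glue

theorem stmt_10 {V I J : Type} (G G' : SimpleGraph V) (W : ℕ)
    (td : TreeDecompOn V I Set.univ G)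
    (hW : ∀ t : I, (td.bag t).ncard ≤ W + 1)
    (S : Set I) (hS : (td.T.induce S).Connected)
    (td' : TreeDecompOn V J (⋃ t ∈ S, td.bag t) G')
    (hW' : ∀ j : J, (td'.bag j).ncard ≤ W + 1)
    (sstar : (td.T.induce Sᶜ).ConnectedComponent → J) :
    (SimpleGraph.fromRel (fun x y : J ⊕ ↥(Sᶜ) =>
      match x, y with
      | Sum.inl a, Sum.inl b => td'.T.Adj a b
      | Sum.inr a, Sum.inr b => td.T.Adj a.1 b.1
      | Sum.inl a, Sum.inr t => (∃ s ∈ S, td.T.Adj s t.1) ∧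
          a = sstar ((td.T.induce Sᶜ).connectedComponentMk t)
      | Sum.inr t, Sum.inl a => (∃ s ∈ S, td.T.Adj s t.1) ∧
          a = sstar ((td.T.induce Sᶜ).connectedComponentMk t))).IsTree ∧
    ∀ k : J ⊕ ↥(Sᶜ),
      (Sum.elim td'.bag (fun t : ↥(Sᶜ) => td.bag t.1) k).ncard ≤ W + 1 := by
  refine ⟨glue_isTree (sstar := sstar) td.isTree td'.isTree hS, ?_⟩
  rintro (j | t)
  exacts [hW' j, hW t]
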